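/- If a λ⊥-term has a right inverse, then the selector λt x₁ … xₘ.t is a right inverse of it, where m is the number of arguments of the head variable in its head normal form λz.zM₁…Mₘ. -/

import Mathlib

/-- Terms of the λ⊥-calculus (de Bruijn indices). -/
inductive Tm : Type
  | var : ℕ → Tm
  | bot : Tm
  | lam : Tm → Tm
  | app : Tm → Tm → Tm
  deriving DecidableEq

namespace Tm

/-- Lift (shift by one) all de Bruijn indices ≥ k. -/
def lift : Tm → ℕ → Tm
  | var n, k => if n < k then var n else var (n+1)
  | bot, _ => bot
  | lam M, k => lam (lift M (k+1))
  | app M N, k => app (lift M k) (lift N k)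

/-- Capture-avoiding substitution of N for variable k. -/
def subst : Tm → ℕ → Tm → Tm
  | var n, k, N => if n < k then var n else if n = k then N else var (n-1)
  | bot, _, _ => bot
  | lam M, k, N => lam (subst M (k+1) (lift N 0))
  | app M P, k, N => app (subst M k N) (subst P k N)

/-- One-step β⊥-reduction (compatible closure). -/
inductive Step : Tm → Tm → Prop
  | beta (M N : Tm) : Step (app (lam M) N) (subst M 0 N)
  | botApp (N : Tm) : Step (app bot N) bot
  | botLam : Step (lam bot) bot
  | appL {M M'} (N) : Step M M' → Step (app M N) (app M' N)
  | appR (M) {N N'} : Step N N' → Step (app M N) (app M N')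
  | lamC {M M'} : Step M M' → Step (lam M) (lam M')

/-- Multi-step reduction. -/
def Red : Tm → Tm → Prop := Relation.ReflTransGen Step

/-- β⊥-conversion: M = N iff they have a common reduct. -/
def Conv (M N : Tm) : Prop := ∃ P, Red M P ∧ Red N P

/-- The identity combinator I = λx.x. -/
def iTm : Tm := lam (var 0)

/-- Composition M ∘ N = λz.M(Nz). -/
def comp (M N : Tm) : Tm := lam (app (lift M 0) (app (lift N 0) (var 0)))

/-- Apply M to a list of arguments. -/
def applist (M : Tm) (Ms : List Tm) : Tm := Ms.foldl app M

/-- Iterated λ-abstraction. -/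
def iterLam : ℕ → Tm → Tm
  | 0, M => M
  | n+1, M => lam (iterLam n M)

/-- The selector λt x₁ … xₘ. t  (a simple right inverse). -/
def sel (m : ℕ) : Tm := iterLam (m+1) (var m)

/-- Number of initial λ-abstractions of a term. -/
def leadLams : Tm → ℕ
  | lam M => leadLams M + 1
  | _ => 0

end Tm

mutual
/-- Strict intersection types μ ::= φ | ω | σ → μ. -/
inductive STy : Type
  | tvar : ℕ → STy
  | omega : STy
  | arrow : ITy → STy → STy
/-- Intersections σ ::= μ | σ ∧ σ. -/
inductive ITy : Type
  | strict : STy → ITy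
  | inter : ITy → ITy → ITy
end

/-- The subtyping preorder on (strict) intersection types. -/
inductive SubTy : ITy → ITy → Prop
  | refl (σ) : SubTy σ σ
  | trans {σ τ ρ} : SubTy σ τ → SubTy τ ρ → SubTy σ ρ
  | toOmega (σ) : SubTy σ (.strict .omega)
  | omegaArr : SubTy (.strict .omega) (.strict (.arrow (.strict .omega) .omega))
  | interL (σ τ) : SubTy (.inter σ τ) σ
  | interR (σ τ) : SubTy (.inter σ τ) τ
  | interMono {σ₁ σ₂ τ₁ τ₂} : SubTy σ₁ τ₁ → SubTy σ₂ τ₂ → SubTy (.inter σ₁ σ₂) (.inter τ₁ τ₂)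
  | arrow {σ τ : ITy} {μ ν : STy} : SubTy τ σ → SubTy (.strict μ) (.strict ν) →
      SubTy (.strict (.arrow σ μ)) (.strict (.arrow τ ν))

/-- σ ∼ τ : mutual subtyping. -/
def EqvTy (σ τ : ITy) : Prop := SubTy σ τ ∧ SubTy τ σ

/-- μ is a conjunct (component) of the intersection σ. -/
inductive IsComp : STy → ITy → Prop
  | strict (μ) : IsComp μ (.strict μ)
  | left {μ σ} (τ) : IsComp μ σ → IsComp μ (.inter σ τ)
  | right {μ τ} (σ) : IsComp μ τ → IsComp μ (.inter σ τ)

/-- The essential intersection type assignment system (contexts are de Bruijn lists). -/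
inductive Der : List ITy → Tm → STy → Prop
  | var {Γ n σ μ} : Γ[n]? = some σ → IsComp μ σ → Der Γ (.var n) μ
  | omega (Γ M) : Der Γ M .omega
  | sub {Γ M μ ν} : Der Γ M μ → SubTy (.strict μ) (.strict ν) → Der Γ M ν
  | lam {Γ M σ μ} : Der (σ :: Γ) M μ → Der Γ (.lam M) (.arrow σ μ)
  | app {Γ M N σ μ} : Der Γ M (.arrow σ μ) → (∀ ν, IsComp ν σ → Der Γ N ν) →
      Der Γ (.app M N) μ

/-- A strict type is inhabited if some closed term has it. -/
def InhabS (μ : STy) : Prop := ∃ M, Der [] M μ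

/-- An intersection is inhabited if a single closed term has all its conjuncts. -/
def InhabI (σ : ITy) : Prop := ∃ M, ∀ μ, IsComp μ σ → Der [] M μ

/-- σ → ρ is inhabited: one term inhabits σ → μ for every conjunct μ of ρ. -/
def InhabArrow (σ ρ : ITy) : Prop := ∃ M, ∀ μ, IsComp μ ρ → Der [] M (.arrow σ μ)

/-- ρ₁ → … → ρₘ → μ. -/
def arrows (l : List ITy) (μ : STy) : STy := l.foldr .arrow μ

/-- μ ◁ ν : μ is a retract of ν. -/
def Retract (μ ν : STy) : Prop :=
  ∃ L R, Der [] L (.arrow (.strict ν) μ) ∧ Der [] R (.arrow (.strict μ) ν) ∧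
    Tm.Conv (Tm.comp L R) Tm.iTm

/-!
If `M ↠ λz. z M₁ … Mₘ`, then `(M ∘ sel m) z ↠ sel m z N₁ … Nₘ ↠ z`, since `sel m z` discards
its next `m` arguments and returns `z`.
-/

namespace Tm

theorem Red.appL {M M' : Tm} (N : Tm) (h : Red M M') : Red (app M N) (app M' N) :=
  Relation.ReflTransGen.lift (app · N) (fun _ _ s => Step.appL N s) _ _ h

theorem Red.appR (M : Tm) {N N' : Tm} (h : Red N N') : Red (app M N) (app M N') :=
  Relation.ReflTransGen.lift (app M ·) (fun _ _ s => Step.appR M s) _ _ h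

theorem Red.lam {M M' : Tm} (h : Red M M') : Red (lam M) (lam M') :=
  Relation.ReflTransGen.lift Tm.lam (fun _ _ s => Step.lamC s) _ _ h

theorem Red.applist {M M' : Tm} (Ns : List Tm) (h : Red M M') :
    Red (applist M Ns) (applist M' Ns) := by
  induction Ns generalizing M M' with
  | nil => exact h
  | cons N Ns ih => exact ih (h.appL N)

theorem lift_lift (M : Tm) {i k : ℕ} (h : i ≤ k) :
    lift (lift M i) (k + 1) = lift (lift M k) i := by
  induction M generalizing i k with
  | var n => simp only [lift]; split_ifs <;> grind [lift]
  | bot => rfl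
  | lam M ih => simp only [lift, ih (Nat.succ_le_succ h)]
  | app M P ihM ihP => simp only [lift, ihM h, ihP h]

theorem lift_subst (M N : Tm) {j k : ℕ} (h : j ≤ k) :
    lift (subst M j N) k = subst (lift M (k + 1)) j (lift N k) := by
  induction M generalizing j k N with
  | var n => simp only [subst, lift]; split_ifs <;> grind [lift, subst]
  | bot => rfl
  | lam M ih =>
    simp only [subst, lift, ih (lift N 0) (Nat.succ_le_succ h), lift_lift N (Nat.zero_le k)]
  | app M P ihM ihP => simp only [subst, lift, ihM N h, ihP N h]

theorem Step.lift {M M' : Tm} (h : Step M M') (k : ℕ) : Step (lift M k) (lift M' k) := by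
  induction h generalizing k with
  | beta M N =>
    rw [Tm.lift, lift_subst M N (Nat.zero_le k)]
    exact Step.beta _ _
  | botApp N => exact Step.botApp _
  | botLam => exact Step.botLam
  | appL N _ ih => exact Step.appL _ (ih k)
  | appR M _ ih => exact Step.appR _ (ih k)
  | lamC _ ih => exact Step.lamC (ih (k + 1))

theorem Red.lift {M M' : Tm} (h : Red M M') (k : ℕ) : Red (lift M k) (lift M' k) :=
  Relation.ReflTransGen.lift (Tm.lift · k) (fun _ _ s => s.lift k) _ _ h

theorem Red.comp_left {M M' : Tm} (N : Tm) (h : Red M M') : Red (comp M N) (comp M' N) :=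
  ((h.lift 0).appL _).lam

theorem lift_applist (M : Tm) (Ns : List Tm) (k : ℕ) :
    lift (applist M Ns) k = applist (lift M k) (Ns.map (lift · k)) := by
  induction Ns generalizing M with
  | nil => rfl
  | cons N Ns ih => exact ih (app M N)

theorem subst_applist (M : Tm) (Ns : List Tm) (k : ℕ) (N : Tm) :
    subst (applist M Ns) k N = applist (subst M k N) (Ns.map (subst · k N)) := by
  induction Ns generalizing M with
  | nil => rfl
  | cons P Ns ih => exact ih (app M P)

theorem lift_iterLam_var {n i k : ℕ} (h : i < n + k) :
    lift (iterLam n (var i)) k = iterLam n (var i) := by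
  induction n generalizing k with
  | zero => simp only [iterLam, lift, if_pos (show i < k by omega)]
  | succ n ih => simp only [iterLam, lift, ih (show i < n + (k + 1) by omega)]

theorem lift_sel (m k : ℕ) : lift (sel m) k = sel m :=
  lift_iterLam_var (by omega)

theorem subst_iterLam_var_self (n j : ℕ) :
    subst (iterLam n (var (n + j))) j (var j) = iterLam n (var (n + j)) := by
  induction n generalizing j with
  | zero => simp [iterLam, subst]
  | succ n ih =>
    have hlift : lift (var j) 0 = var (j + 1) := by simp [lift]
    simp only [iterLam, subst, hlift, show n + 1 + j = n + (j + 1) by omega, ih]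

theorem subst_iterLam_var_succ (n j : ℕ) (N : Tm) :
    subst (iterLam n (var (n + j + 1))) j N = iterLam n (var (n + j)) := by
  induction n generalizing j N with
  | zero => simp [iterLam, subst]
  | succ n ih =>
    simp only [iterLam, subst, show n + 1 + j + 1 = n + (j + 1) + 1 by omega, ih,
      show n + (j + 1) = n + 1 + j by omega]

theorem Step.sel_app_var_zero (m : ℕ) : Step (app (sel m) (var 0)) (iterLam m (var m)) :=
  subst_iterLam_var_self m 0 ▸ Step.beta _ _

theorem red_applist_iterLam_var_length (Ns : List Tm) :
    Red (applist (iterLam Ns.length (var Ns.length)) Ns) (var 0) := by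
  induction Ns with
  | nil => exact Relation.ReflTransGen.refl
  | cons N Ns ih =>
    have hdrop : Step (app (iterLam (Ns.length + 1) (var (Ns.length + 1))) N)
        (iterLam Ns.length (var Ns.length)) :=
      subst_iterLam_var_succ Ns.length 0 N ▸ Step.beta _ _
    exact (Red.applist Ns (.single hdrop)).trans ih

theorem red_lam_applist_var_zero_app_sel (Ns : List Tm) :
    Red (app (lam (applist (var 0) Ns)) (app (sel Ns.length) (var 0))) (var 0) := by
  have hbeta : Step (app (lam (applist (var 0) Ns)) (iterLam Ns.length (var Ns.length)))
      (applist (iterLam Ns.length (var Ns.length))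
        (Ns.map (subst · 0 (iterLam Ns.length (var Ns.length))))) := by
    simpa [subst_applist, subst] using Step.beta (applist (var 0) Ns) _
  have hdrop := red_applist_iterLam_var_length
    (Ns.map (subst · 0 (iterLam Ns.length (var Ns.length))))
  rw [List.length_map] at hdrop
  exact ((Red.appR _ (.single (Step.sel_app_var_zero _))).trans (.single hbeta)).trans hdrop

theorem red_comp_lam_applist_var_zero_sel (Ms : List Tm) :
    Red (comp (lam (applist (var 0) Ms)) (sel Ms.length)) iTm := by
  have hbody := red_lam_applist_var_zero_app_sel (Ms.map (lift · 1))
  rw [List.length_map] at hbody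
  simpa [comp, iTm, lift, lift_applist, lift_sel] using hbody.lam

end Tm

/-- if a term has a right inverse, then the selector λt x₁…xₘ.t is a
right inverse of it, m being the number of arguments of the head variable in its
hnf λz.zM₁…Mₘ. -/
theorem selector_right_inverse {M : Tm} {Ms : List Tm}
    (hinv : ∃ R, Tm.Conv (Tm.comp M R) Tm.iTm)
    (hhnf : Tm.Red M (Tm.lam (Tm.applist (Tm.var 0) Ms))) :
    Tm.Conv (Tm.comp M (Tm.sel Ms.length)) Tm.iTm :=
  ⟨Tm.iTm, (hhnf.comp_left _).trans (Tm.red_comp_lam_applist_var_zero_sel Ms), .refl⟩
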